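/- arXiv:math/0701618 — 7 statements merged into one kernel-verified Lean document; each statement's English description precedes it below -/
import Mathlib

section
/- Let G be a group acting by homeomorphisms on a metric space X, and let A ⊆ X be a nonempty, compact, countable, G-invariant subset. Then there exists a point a ∈ A whose G-orbit is finite. -/
open Pointwise

/-- If a group `G` acts by homeomorphisms on a metric space `X` and `A ⊆ X` is a nonempty
compact countable `G`-invariant subset, then some point of `A` has finite `G`-orbit. -/
theorem stmt1 {G X : Type*} [Group G] [MetricSpace X] [MulAction G X]
    (hcont : ∀ g : G, Continuous fun x : X => g • x)
    (A : Set X) (hne : A.Nonempty) (hcomp : IsCompact A) (hcount : A.Countable)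
    (hinv : ∀ g : G, g • A = A) :
    ∃ a ∈ A, (MulAction.orbit G a).Finite := by
  haveI : ContinuousConstSMul G X := ⟨hcont⟩
  set S : Set (Set X) := {B | B ⊆ A ∧ B.Nonempty ∧ IsClosed B ∧ ∀ g : G, g • B = B} with hSdef
  have hAS : A ∈ S := ⟨subset_rfl, hne, hcomp.isClosed, hinv⟩
  -- Zorn's lemma: get a minimal nonempty closed invariant subset B
  have hzorn : ∀ c ⊆ S, IsChain (· ⊆ ·) c → c.Nonempty →
      ∃ lb ∈ S, ∀ s ∈ c, lb ⊆ s := by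
    intro c hcS hchain hcne
    refine ⟨⋂₀ c, ?_, fun s hs => Set.sInter_subset_of_mem hs⟩
    haveI : Nonempty ↥c := hcne.to_subtype
    have hdir : DirectedOn (· ⊇ ·) c := by
      intro s hs t ht
      rcases hchain.total hs ht with h | h
      · exact ⟨s, hs, subset_rfl, h⟩
      · exact ⟨t, ht, h, subset_rfl⟩
    have hne' : (⋂₀ c).Nonempty :=
      IsCompact.nonempty_sInter_of_directed_nonempty_isCompact_isClosed hdir
        (fun U hU => (hcS hU).2.1)
        (fun U hU => hcomp.of_isClosed_subset (hcS hU).2.2.1 (hcS hU).1)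
        (fun U hU => (hcS hU).2.2.1)
    obtain ⟨s₀, hs₀⟩ := hcne
    refine ⟨(Set.sInter_subset_of_mem hs₀).trans (hcS hs₀).1, hne', ?_, ?_⟩
    · exact isClosed_sInter fun U hU => (hcS hU).2.2.1
    · intro g
      rw [Set.sInter_eq_iInter, Set.smul_set_iInter]
      exact Set.iInter_congr fun s => (hcS s.2).2.2.2 g
  obtain ⟨B, hBA', hminB⟩ := zorn_superset_nonempty S hzorn A hAS
  obtain ⟨hBA, hBne, hBcl, hBinv⟩ := hminB.1
  have hBcomp : IsCompact B := hcomp.of_isClosed_subset hBcl hBA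
  have hBcount : B.Countable := hcount.mono hBA
  -- B has an isolated point, by Baire category on the compact metric space B
  haveI : CompactSpace ↥B := isCompact_iff_compactSpace.mp hBcomp
  haveI : Countable ↥B := hBcount.to_subtype
  haveI : Nonempty ↥B := hBne.to_subtype
  obtain ⟨b, hbint⟩ := nonempty_interior_of_iUnion_of_closed
    (f := fun x : ↥B => ({x} : Set ↥B)) (fun x => isClosed_singleton)
    (Set.iUnion_of_singleton _)
  have hopen : IsOpen ({b} : Set ↥B) := by
    have h1 : interior ({b} : Set ↥B) = {b} :=
      Set.Subset.antisymm interior_subset (by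
        obtain ⟨y, hy⟩ := hbint
        have hyb : y ∈ ({b} : Set ↥B) := interior_subset hy
        have : y = b := hyb
        subst this
        exact Set.singleton_subset_iff.mpr hy)
    rw [← h1]; exact isOpen_interior
  rw [isOpen_induced_iff] at hopen
  obtain ⟨U, hUopen, hUpre⟩ := hopen
  have hUB : U ∩ B = {(b : X)} := by
    ext x
    constructor
    · rintro ⟨hxU, hxB⟩
      have : (⟨x, hxB⟩ : ↥B) ∈ Subtype.val ⁻¹' U := hxU
      rw [hUpre] at this
      exact congrArg Subtype.val this
    · rintro rfl
      have : b ∈ Subtype.val ⁻¹' U := by rw [hUpre]; rfl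
      exact ⟨this, b.2⟩
  have hbU : (b : X) ∈ U := by
    have : (b : X) ∈ U ∩ B := by rw [hUB]; rfl
    exact this.1
  obtain ⟨bx, hbB⟩ := b
  have hUB' : U ∩ B = {bx} := hUB
  have hbU' : bx ∈ U := hbU
  -- every point of B lies in the orbit of bx
  have horb : ∀ x ∈ B, x ∈ MulAction.orbit G bx := by
    intro x hxB
    have horbsub : MulAction.orbit G x ⊆ B := by
      rintro y ⟨g, rfl⟩
      rw [← hBinv g]
      exact Set.smul_mem_smul_set hxB
    set C : Set X := closure (MulAction.orbit G x) with hCdef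
    have hCB : C ⊆ B := closure_minimal horbsub hBcl
    have hCS : C ∈ S := by
      refine ⟨hCB.trans hBA, ⟨x, subset_closure (MulAction.mem_orbit_self x)⟩,
        isClosed_closure, fun g => ?_⟩
      rw [hCdef, ← closure_smul, MulAction.smul_orbit]
    have hCeqB : B ⊆ C := hminB.2 hCS hCB
    have hbC : bx ∈ C := hCeqB hbB
    rw [mem_closure_iff] at hbC
    obtain ⟨y, hyU, g, rfl⟩ := hbC U hUopen hbU'
    have hmem : g • x ∈ U ∩ B := ⟨hyU, horbsub ⟨g, rfl⟩⟩
    rw [hUB'] at hmem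
    exact ⟨g⁻¹, by rw [← hmem]; simp⟩
  -- B is finite: cover it by translates of U
  have hchoice : ∀ x : ↥B, ∃ g : G, g • bx = (x : X) := fun x => horb x x.2
  choose gx hgx using hchoice
  have hVopen : ∀ x : ↥B, IsOpen (gx x • U) := fun x => hUopen.smul (gx x)
  have hcover : B ⊆ ⋃ x : ↥B, gx x • U := by
    intro y hy
    refine Set.mem_iUnion.mpr ⟨⟨y, hy⟩, ?_⟩
    have h1 : gx ⟨y, hy⟩ • bx ∈ gx ⟨y, hy⟩ • U := Set.smul_mem_smul_set hbU'
    rw [hgx ⟨y, hy⟩] at h1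
    exact h1
  obtain ⟨t, ht⟩ := hBcomp.elim_finite_subcover _ hVopen hcover
  have hBsub : B ⊆ Subtype.val '' (t : Set ↥B) := by
    intro y hy
    obtain ⟨i, hit, hyi⟩ := Set.mem_iUnion₂.mp (ht hy)
    have hmem : y ∈ gx i • U ∩ B := ⟨hyi, hy⟩
    have heq : gx i • U ∩ B = {gx i • bx} := by
      rw [← Set.smul_set_singleton, ← hUB', Set.smul_set_inter, hBinv]
    rw [heq] at hmem
    exact ⟨i, hit, (hmem.trans (hgx i)).symm⟩
  have hBfin : B.Finite := Set.Finite.subset (t.finite_toSet.image _) hBsub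
  have horbB : MulAction.orbit G bx ⊆ B := by
    rintro y ⟨g, rfl⟩
    rw [← hBinv g]
    exact Set.smul_mem_smul_set hbB
  exact ⟨bx, hBA hbB, hBfin.subset horbB⟩
end

section
/- Let D ⊆ ℝ be a nonempty compact perfect set, let a = inf D and b = sup D. Then there exists a monotone nondecreasing continuous surjection f : [a,b] → [0,1] such that f(D) = [0,1], and for all x ≤ y in [a,b], f(x) = f(y) if and only if the open interval (x,y) contains no point of D. -/
/-!
The function is the distribution function `cdf μ` of an atomless probability measure `μ` whose
support is exactly `D`: having no atoms makes `cdf μ` continuous, and `cdf μ x = cdf μ y` iff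
`μ (x, y) = 0` iff `(x, y)` misses the support. Such a `μ` is a weighted sum, over the basic open
sets `U` meeting `D`, of atomless probability measures concentrated on perfect subsets of `U ∩ D`.
-/

open MeasureTheory Set Filter Topology ProbabilityTheory
open scoped ENNReal

namespace MeasureTheory

lemma nullSingletonClass_map {α β : Type*} [MeasurableSpace α] [MeasurableSpace β]
    [MeasurableSingletonClass β] {μ : Measure α} [NullSingletonClass μ] {f : α → β}
    (hf : Measurable f) (hinj : f.Injective) : NullSingletonClass (μ.map f) where
  measure_singleton x := by
    rw [Measure.map_apply hf (measurableSet_singleton x)]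
    exact (subsingleton_singleton.preimage hinj).measure_zero μ

namespace Measure

variable {X : Type*} [TopologicalSpace X] [MeasurableSpace X]

lemma support_smul (μ : Measure X) {c : ℝ≥0∞} (hc : c ≠ 0) : (c • μ).support = μ.support := by
  ext x
  simp only [mem_support_iff_forall, smul_apply, smul_eq_mul, pos_iff_ne_zero, ne_eq,
    mul_eq_zero, hc, false_or]

lemma measure_eq_zero_iff_inter_support_eq_empty [HereditarilyLindelofSpace X] {μ : Measure X}
    {U : Set X} (hU : IsOpen U) : μ U = 0 ↔ U ∩ μ.support = ∅ := by
  rw [← disjoint_iff_inter_eq_empty, ← subset_compl_iff_disjoint_right]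
  exact ⟨subset_compl_support_of_isOpen hU, fun h => measure_mono_null h measure_compl_support⟩

end Measure

end MeasureTheory

lemma unitInterval.not_countable : ¬Countable unitInterval := fun _ => by
  simpa using (countable_univ (α := unitInterval)).measure_zero volume

section Perfect

variable {α : Type*} [MetricSpace α] [CompleteSpace α] [MeasurableSpace α] [BorelSpace α]

/-- Lebesgue measure on `[0,1]`, transported to a Cantor set inside `C` through a Borel
isomorphism of `[0,1]` with `ℕ → Bool`. -/
theorem Perfect.exists_nullSingletonClass_probabilityMeasure {C : Set α} (hC : Perfect C)
    (hne : C.Nonempty) :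
    ∃ ν : Measure α, IsProbabilityMeasure ν ∧ NullSingletonClass ν ∧ ν Cᶜ = 0 := by
  obtain ⟨g, hgC, hg, hginj⟩ := hC.exists_nat_bool_injection hne
  let e := PolishSpace.measurableEquivNatBoolOfNotCountable unitInterval.not_countable
  have hf : Measurable (g ∘ e) := hg.measurable.comp e.measurable
  refine ⟨volume.map (g ∘ e), Measure.isProbabilityMeasure_map hf.aemeasurable,
    nullSingletonClass_map hf (hginj.comp e.injective), ?_⟩
  rw [Measure.map_apply hf hC.closed.measurableSet.compl]
  convert measure_empty (μ := volume)
  exact eq_empty_of_forall_notMem fun x hx => hx (hgC (mem_range_self _))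

theorem Perfect.exists_probabilityMeasure_inter_isOpen {D U : Set α} (hD : Perfect D)
    (hU : IsOpen U) (hUD : (U ∩ D).Nonempty) :
    ∃ ν : Measure α, IsProbabilityMeasure ν ∧ NullSingletonClass ν ∧ ν (U ∩ D)ᶜ = 0 := by
  obtain ⟨x, hxU, hxD⟩ := hUD
  obtain ⟨t, ht, htc, htU⟩ := exists_mem_nhds_isClosed_subset (hU.mem_nhds hxU)
  obtain ⟨hC, hCne⟩ :=
    hD.closure_nhds_inter x hxD (mem_interior_iff_mem_nhds.2 ht) isOpen_interior
  obtain ⟨ν, hν, hνa, hνC⟩ := hC.exists_nullSingletonClass_probabilityMeasure hCne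
  have hCsub : closure (interior t ∩ D) ⊆ U ∩ D :=
    (closure_minimal (inter_subset_inter_left _ interior_subset) (htc.inter hD.closed)).trans
      (inter_subset_inter_left _ htU)
  exact ⟨ν, hν, hνa, measure_mono_null (compl_subset_compl.2 hCsub) hνC⟩

theorem Perfect.exists_probabilityMeasure_support_eq [SecondCountableTopology α] {D : Set α}
    (hD : Perfect D) (hne : D.Nonempty) :
    ∃ μ : Measure α, IsProbabilityMeasure μ ∧ NullSingletonClass μ ∧ μ.support = D := by
  obtain ⟨B, hBc, -, hB⟩ := TopologicalSpace.exists_countable_basis α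
  let ι := {s ∈ B | (s ∩ D).Nonempty}
  have : Countable ι := (hBc.mono fun _ hs => hs.1).to_subtype
  choose ν hνp hνa hνD using fun i : ι =>
    hD.exists_probabilityMeasure_inter_isOpen (hB.isOpen i.2.1) i.2.2
  obtain ⟨w, hw0, hw1⟩ := ENNReal.exists_pos_sum_of_countable one_ne_zero ι
  let μ := Measure.sum fun i => (w i : ℝ≥0∞) • ν i
  have hpos : ∀ i : ι, 0 < μ i := fun i =>
    calc (0 : ℝ≥0∞) < w i := ENNReal.coe_pos.2 (hw0 i)
      _ = w i * ν i (i ∩ D) := by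
        rw [prob_compl_eq_zero_iff ((hB.isOpen i.2.1).measurableSet.inter
          hD.closed.measurableSet)|>.1 (hνD i), mul_one]
      _ ≤ (w i • ν i) i := mul_le_mul_right (measure_mono inter_subset_left) _
      _ ≤ μ i := Measure.le_sum _ i _
  have hsupp : μ.support = D := by
    refine (Measure.support_subset_of_isClosed hD.closed ?_).antisymm fun x hx => ?_
    · refine Measure.sum_apply_eq_zero.2 fun i => ?_
      simp [measure_mono_null (compl_subset_compl.2 inter_subset_right) (hνD i)]
    · refine (Measure.mem_support_iff_forall x).2 fun U hU => ?_
      obtain ⟨s, hsB, hxs, hsU⟩ := hB.mem_nhds_iff.1 hU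
      exact (hpos ⟨s, hsB, x, hxs, hx⟩).trans_le (measure_mono hsU)
  have hfin : μ univ ≠ ∞ := by
    refine ne_top_of_le_ne_top (hw1.trans ENNReal.one_lt_top).ne ?_
    simp [μ, Measure.sum_apply _ MeasurableSet.univ]
  have hne0 : μ ≠ 0 := by
    obtain ⟨x, hx⟩ := hne
    obtain ⟨s, hsB, hxs, -⟩ := hB.mem_nhds_iff.1 (univ_mem (f := 𝓝 x))
    exact fun h => (hpos ⟨s, hsB, x, hxs, hx⟩).ne' (by simp [h])
  have : IsFiniteMeasure μ := ⟨hfin.lt_top⟩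
  have : NeZero μ := ⟨hne0⟩
  refine ⟨(μ univ)⁻¹ • μ, inferInstance, ⟨fun x => ?_⟩, ?_⟩
  · simp [μ]
  · rw [Measure.support_smul _ (ENNReal.inv_ne_zero.2 hfin), hsupp]

end Perfect

namespace ProbabilityTheory

variable (μ : Measure ℝ) [IsProbabilityMeasure μ]

lemma cdf_eq_one_of_measure_Ioi {b : ℝ} (h : μ (Ioi b) = 0) : cdf μ b = 1 := by
  rw [← ENNReal.ofReal_eq_one, ofReal_cdf, ← compl_Ioi, prob_compl_eq_one_iff measurableSet_Ioi]
  exact h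

variable [NullSingletonClass μ]

lemma cdf_eq_zero_of_measure_Iio {a : ℝ} (h : μ (Iio a) = 0) : cdf μ a = 0 := by
  have := ofReal_cdf μ a
  rw [← measure_congr Iio_ae_eq_Iic, h, ENNReal.ofReal_eq_zero] at this
  exact this.antisymm (cdf_nonneg μ a)

lemma continuous_cdf : Continuous (cdf μ) := by
  refine continuous_iff_continuousAt.2 fun x =>
    (monotone_cdf μ).continuousAt_iff_leftLim_eq_rightLim.2 ?_
  have h := (cdf μ).measure_singleton x
  rw [measure_cdf, measure_singleton, eq_comm, ENNReal.ofReal_eq_zero, sub_nonpos] at h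
  rw [(cdf μ).rightLim_eq]
  exact ((monotone_cdf μ).leftLim_le le_rfl).antisymm h

lemma cdf_eq_cdf_iff {x y : ℝ} (hxy : x ≤ y) : cdf μ x = cdf μ y ↔ μ (Ioo x y) = 0 := by
  have h := (cdf μ).measure_Ioc x y
  rw [measure_cdf] at h
  rw [measure_congr Ioo_ae_eq_Ioc, h, ENNReal.ofReal_eq_zero, sub_nonpos]
  exact ⟨Eq.ge, (monotone_cdf μ hxy).antisymm⟩

end ProbabilityTheory

/-- If `D ⊆ ℝ` is a nonempty compact perfect set with `a = inf D` and `b = sup D`, then there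
is a monotone nondecreasing continuous surjection `f : [a,b] → [0,1]` with `f(D) = [0,1]`,
such that two points of `[a,b]` have the same image iff no point of `D` lies strictly
between them. -/
theorem stmt4 (D : Set ℝ) (hne : D.Nonempty) (hcomp : IsCompact D) (hperf : Perfect D) :
    ∃ f : ℝ → ℝ, MonotoneOn f (Set.Icc (sInf D) (sSup D)) ∧
      ContinuousOn f (Set.Icc (sInf D) (sSup D)) ∧
      f '' Set.Icc (sInf D) (sSup D) = Set.Icc 0 1 ∧
      f '' D = Set.Icc 0 1 ∧
      ∀ x ∈ Set.Icc (sInf D) (sSup D), ∀ y ∈ Set.Icc (sInf D) (sSup D), x ≤ y →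
        (f x = f y ↔ Set.Ioo x y ∩ D = ∅) := by
  obtain ⟨μ, _, _, rfl⟩ := hperf.exists_probabilityMeasure_support_eq hne
  have hsub : μ.support ⊆ Icc (sInf μ.support) (sSup μ.support) := fun d hd =>
    ⟨csInf_le hcomp.bddBelow hd, le_csSup hcomp.bddAbove hd⟩
  have hlevel : ∀ x y, x ≤ y → (cdf μ x = cdf μ y ↔ Ioo x y ∩ μ.support = ∅) := fun x y hxy =>
    (cdf_eq_cdf_iff μ hxy).trans (Measure.measure_eq_zero_iff_inter_support_eq_empty isOpen_Ioo)
  have hzero : cdf μ (sInf μ.support) = 0 := cdf_eq_zero_of_measure_Iio μ <|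
    (Measure.measure_eq_zero_iff_inter_support_eq_empty isOpen_Iio).2 <|
      eq_empty_of_forall_notMem fun d hd => hd.1.not_ge (hsub hd.2).1
  have hone : cdf μ (sSup μ.support) = 1 := cdf_eq_one_of_measure_Ioi μ <|
    (Measure.measure_eq_zero_iff_inter_support_eq_empty isOpen_Ioi).2 <|
      eq_empty_of_forall_notMem fun d hd => hd.1.not_ge (hsub hd.2).2
  have himage : cdf μ '' Icc (sInf μ.support) (sSup μ.support) = Icc 0 1 := by
    rw [(continuous_cdf μ).continuousOn.image_Icc_of_monotoneOn (hsub (hcomp.sInf_mem hne)).2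
      ((monotone_cdf μ).monotoneOn _), hzero, hone]
  refine ⟨cdf μ, (monotone_cdf μ).monotoneOn _, (continuous_cdf μ).continuousOn, himage,
    ((image_mono hsub).trans_eq himage).antisymm ?_, fun x _ y _ => hlevel x y⟩
  rw [← himage]
  rintro _ ⟨x, hx, rfl⟩
  -- the largest point of the support below `x` has the same image as `x`
  obtain ⟨d, ⟨hd, hdx⟩, hgreatest⟩ :=
    (hcomp.inter_right isClosed_Iic).exists_isGreatest ⟨_, hcomp.sInf_mem hne, hx.1⟩
  refine ⟨d, hd, (hlevel d x hdx).2 (eq_empty_of_forall_notMem fun z hz => ?_)⟩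
  exact hz.1.1.not_ge (hgreatest ⟨hz.2, hz.1.2.le⟩)
end

section
/- Let C be a nonempty closed perfect subset of the unit circle S¹. Then there exists a continuous surjection q : S¹ → S¹ such that (i) every fiber q⁻¹({z}) is compact and connected, (ii) q(C) = S¹, and (iii) for all x ≠ y in S¹, q(x) = q(y) if and only if some connected component of S¹ \ {x,y} is disjoint from C. -/
/-
Choose an atomless finite measure `μ` on the circle whose support is exactly `C`: a weighted sum,
over a countable base, of probability measures carried by the perfect sets `closure (U ∩ C)`
(each of which is uncountable, hence Borel isomorphic to `[0, 1]`). Lift `μ` to a `ℤ`-periodic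
measure on `ℝ` and let `G` be its distribution function, normalised to increase by `2π` per
period. Then `G` is a continuous monotone lift of a degree-one circle map `q`: its fibres are
images of the compact intervals `G ⁻¹' {t}`, and `q` identifies the endpoints of an arc exactly
when the arc has measure zero, i.e. misses `C`.
-/

/-- The unit circle, modeled as the reals modulo `2π`. -/
abbrev S1 : Type := AddCircle (2 * Real.pi)

open Set Function Topology MeasureTheory
open scoped ENNReal

section ConnectedComponents

variable {α : Type*} [TopologicalSpace α]

theorem connectedComponentIn_union_eq_left {A B : Set α} (hA : IsOpen A) (hB : IsOpen B)
    (hAB : Disjoint A B) (hAc : IsPreconnected A) {z : α} (hz : z ∈ A) :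
    connectedComponentIn (A ∪ B) z = A :=
  (isPreconnected_connectedComponentIn.subset_left_of_subset_union hA hB hAB
    (connectedComponentIn_subset _ _) ⟨z, mem_connectedComponentIn (.inl hz), hz⟩).antisymm
    (hAc.subset_connectedComponentIn hz subset_union_left)

theorem exists_connectedComponentIn_union_iff {A B : Set α} (hA : IsOpen A) (hB : IsOpen B)
    (hAB : Disjoint A B) (hAc : IsConnected A) (hBc : IsConnected B) {P : Set α → Prop} :
    (∃ z ∈ A ∪ B, P (connectedComponentIn (A ∪ B) z)) ↔ P A ∨ P B := by
  have hcompA {z} (hz : z ∈ A) : connectedComponentIn (A ∪ B) z = A :=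
    connectedComponentIn_union_eq_left hA hB hAB hAc.isPreconnected hz
  have hcompB {z} (hz : z ∈ B) : connectedComponentIn (A ∪ B) z = B := by
    rw [union_comm]
    exact connectedComponentIn_union_eq_left hB hA hAB.symm hBc.isPreconnected hz
  constructor
  · rintro ⟨z, hz | hz, hP⟩
    · exact .inl (hcompA hz ▸ hP)
    · exact .inr (hcompB hz ▸ hP)
  · rintro (hP | hP)
    · obtain ⟨z, hz⟩ := hAc.nonempty
      exact ⟨z, .inl hz, (hcompA hz).symm ▸ hP⟩
    · obtain ⟨z, hz⟩ := hBc.nonempty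
      exact ⟨z, .inr hz, (hcompB hz).symm ▸ hP⟩

end ConnectedComponents

theorem MeasureTheory.Measure.measure_eq_zero_iff_disjoint_support {X : Type*}
    [TopologicalSpace X] [HereditarilyLindelofSpace X] [MeasurableSpace X] {μ : Measure X}
    {U : Set X} (hU : IsOpen U) : μ U = 0 ↔ Disjoint U μ.support :=
  ⟨fun h => subset_compl_iff_disjoint_right.mp (Measure.subset_compl_support_of_isOpen hU h),
    fun h => measure_mono_null (subset_compl_iff_disjoint_right.mpr h)
      Measure.measure_compl_support⟩

theorem uncountable_nat_bool : Uncountable (ℕ → Bool) := by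
  rw [← not_countable_iff, ← Cardinal.mk_le_aleph0_iff, not_le]
  simpa using Cardinal.cantor Cardinal.aleph0

theorem Perfect.uncountable {X : Type*} [TopologicalSpace X] [PolishSpace X] {K : Set X}
    (hK : Perfect K) (hne : K.Nonempty) : Uncountable K := by
  let := TopologicalSpace.upgradeIsCompletelyMetrizable X
  obtain ⟨f, hfK, -, hf⟩ := hK.exists_nat_bool_injection hne
  have := uncountable_nat_bool
  exact (injective_codRestrict (fun b => hfK (mem_range_self b)) |>.mpr hf).uncountable

section Polish

variable {X : Type*} [TopologicalSpace X] [PolishSpace X] [MeasurableSpace X] [BorelSpace X]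

theorem Perfect.exists_isProbabilityMeasure_nullSingletonClass {K : Set X} (hK : Perfect K)
    (hne : K.Nonempty) :
    ∃ m : Measure X, IsProbabilityMeasure m ∧ NullSingletonClass m ∧ m Kᶜ = 0 := by
  have := hK.closed.polishSpace
  have := hK.uncountable hne
  have hI : ¬ Countable unitInterval := fun _ => by
    simpa using countable_univ.measure_zero (volume : Measure unitInterval)
  let e : unitInterval ≃ᵐ K := PolishSpace.measurableEquivOfNotCountable hI not_countable
  have he : Measurable (fun x => (e x : X)) := measurable_subtype_coe.comp e.measurable
  refine ⟨volume.map fun x => (e x : X), Measure.isProbabilityMeasure_map he.aemeasurable,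
    ⟨fun x => ?_⟩, ?_⟩
  · rw [Measure.map_apply he (measurableSet_singleton x)]
    exact Subsingleton.measure_zero
      (fun a ha b hb => e.injective (Subtype.val_injective (ha.trans hb.symm))) volume
  · rw [Measure.map_apply he hK.closed.measurableSet.compl]
    convert measure_empty (μ := (volume : Measure unitInterval))
    exact eq_empty_of_forall_notMem fun x hx => hx (e x).2

theorem exists_isFiniteMeasure_measure_eq_zero_iff {Y : Type*} [MeasurableSpace Y] {ι : Type*}
    [Countable ι] (m : ι → Measure Y) [∀ i, IsProbabilityMeasure (m i)] :
    ∃ μ : Measure Y, IsFiniteMeasure μ ∧ ∀ s, μ s = 0 ↔ ∀ i, m i s = 0 := by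
  obtain ⟨w, hw0, hw⟩ := ENNReal.exists_pos_sum_of_countable one_ne_zero ι
  refine ⟨Measure.sum fun i => (w i : ℝ≥0∞) • m i, ⟨?_⟩, fun s => ?_⟩
  · simpa [Measure.sum_apply_of_countable] using hw.trans ENNReal.one_lt_top
  · simp [Measure.sum_apply_of_countable, ENNReal.tsum_eq_zero, (hw0 _).ne']

theorem Perfect.exists_isFiniteMeasure_support_eq {C : Set X} (hC : Perfect C) :
    ∃ μ : Measure X, IsFiniteMeasure μ ∧ NullSingletonClass μ ∧ μ.support = C := by
  obtain ⟨B, hBc, -, hB⟩ := TopologicalSpace.exists_countable_basis X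
  let ι := {U : Set X // U ∈ B ∧ (U ∩ C).Nonempty}
  have : Countable ι := (hBc.mono fun _ hU => hU.1).to_subtype
  have hK (i : ι) : Perfect (closure (i.1 ∩ C)) ∧ (closure (i.1 ∩ C)).Nonempty :=
    have ⟨z, hzU, hzC⟩ := i.2.2
    hC.closure_nhds_inter z hzC hzU (hB.isOpen i.2.1)
  choose m hprob hnull hmK using fun i =>
    (hK i).1.exists_isProbabilityMeasure_nullSingletonClass (hK i).2
  obtain ⟨μ, hμ, hμ0⟩ := exists_isFiniteMeasure_measure_eq_zero_iff m
  refine ⟨μ, hμ, ⟨fun x => (hμ0 _).2 fun i => measure_singleton x⟩,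
    subset_antisymm ?_ ?_⟩
  · refine Measure.support_subset_of_isClosed hC.closed (mem_ae_iff.mpr ((hμ0 _).2 fun i => ?_))
    exact measure_mono_null
      (compl_subset_compl.mpr (closure_minimal inter_subset_right hC.closed)) (hmK i)
  · intro z hz
    refine (Measure.mem_support_iff_forall z).2 fun V hV => pos_iff_ne_zero.2 fun hV0 => ?_
    obtain ⟨W, hW, hWc, hWV⟩ := exists_mem_nhds_isClosed_subset hV
    obtain ⟨U, hUB, hzU, hUW⟩ := hB.mem_nhds_iff.mp hW
    let i : ι := ⟨U, hUB, z, hzU, hz⟩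
    have hKV : closure (U ∩ C) ⊆ V :=
      (closure_minimal (inter_subset_left.trans hUW) hWc).trans hWV
    have := measure_mono_null hKV ((hμ0 V).1 hV0 i)
    rw [(prob_compl_eq_zero_iff isClosed_closure.measurableSet).mp (hmK i)] at this
    exact one_ne_zero this

end Polish

namespace AddCircle

variable {T : ℝ}

theorem isOpen_coe_image_Ioo (a b : ℝ) : IsOpen (((↑) : ℝ → AddCircle T) '' Ioo a b) :=
  QuotientAddGroup.isOpenMap_coe _ isOpen_Ioo

theorem isConnected_coe_image_Ioo {a b : ℝ} (hab : a < b) :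
    IsConnected (((↑) : ℝ → AddCircle T) '' Ioo a b) :=
  (isConnected_Ioo hab).image _ (AddCircle.continuous_mk' T).continuousOn

variable [hT : Fact (0 < T)]

theorem coe_eq_coe_iff_of_le_of_le_add {a b : ℝ} (hab : a ≤ b) (hba : b ≤ a + T) :
    (a : AddCircle T) = b ↔ b = a ∨ b = a + T := by
  rcases hba.lt_or_eq with hlt | rfl
  · rw [coe_eq_coe_iff_of_mem_Ico ⟨le_rfl, lt_add_of_pos_right a hT.out⟩ ⟨hab, hlt⟩]
    constructor
    · exact fun h => .inl h.symm
    · rintro (h | h)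
      · exact h.symm
      · exact absurd h hlt.ne
  · simp

theorem exists_coe_eq_coe_lt_lt_add {x y : AddCircle T} (hxy : x ≠ y) :
    ∃ u v : ℝ, (u : AddCircle T) = x ∧ (v : AddCircle T) = y ∧ u < v ∧ v < u + T := by
  obtain ⟨u, rfl⟩ := QuotientAddGroup.mk_surjective x
  obtain ⟨⟨v, hv₁, hv₂⟩, hv⟩ := (equivIco T u).symm.surjective y
  refine ⟨u, v, rfl, hv, hv₁.lt_of_ne ?_, hv₂⟩
  rintro rfl
  exact hxy hv

theorem injOn_coe_Ico (a : ℝ) : InjOn ((↑) : ℝ → AddCircle T) (Ico a (a + T)) :=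
  fun _ hx _ hy => (coe_eq_coe_iff_of_mem_Ico hx hy).mp

theorem compl_pair_eq_union {u v : ℝ} (huv : u < v) (hvu : v < u + T) :
    ({(u : AddCircle T), (v : AddCircle T)}ᶜ : Set (AddCircle T)) =
      (↑) '' Ioo u v ∪ (↑) '' Ioo v (u + T) := by
  have hsub : {u, v} ⊆ Ico u (u + T) := by
    rintro w (rfl | rfl)
    exacts [⟨le_rfl, by linarith⟩, ⟨huv.le, hvu⟩]
  rw [← image_union, compl_eq_univ_sdiff, ← coe_image_Ico_eq T u, ← image_pair,
    ← (injOn_coe_Ico u).image_sdiff_subset hsub]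
  congr 1
  ext w
  simp only [mem_sdiff, mem_Ico, mem_insert_iff, mem_singleton_iff, mem_union, mem_Ioo, not_or]
  constructor
  · rintro ⟨⟨h₁, h₂⟩, hu, hv⟩
    rcases lt_or_gt_of_ne hv with h | h
    · exact .inl ⟨lt_of_le_of_ne h₁ (Ne.symm hu), h⟩
    · exact .inr ⟨h, h₂⟩
  · rintro (⟨h₁, h₂⟩ | ⟨h₁, h₂⟩) <;>
      exact ⟨⟨by linarith, by linarith⟩, by rintro rfl; linarith, by rintro rfl; linarith⟩

theorem disjoint_coe_image_Ioo {u v : ℝ} (huv : u < v) (hvu : v < u + T) :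
    Disjoint (((↑) : ℝ → AddCircle T) '' Ioo u v) ((↑) '' Ioo v (u + T)) := by
  rw [disjoint_iff_inter_eq_empty, ← (injOn_coe_Ico u).image_inter
    (fun w hw => ⟨hw.1.le, hw.2.trans hvu⟩) (fun w hw => ⟨huv.le.trans hw.1.le, hw.2⟩),
    Ioo_inter_Ioo, Ioo_eq_empty (by simp [huv.le]), image_empty]

theorem exists_connectedComponentIn_compl_pair_iff {u v : ℝ} (huv : u < v) (hvu : v < u + T)
    {P : Set (AddCircle T) → Prop} :
    (∃ z ∈ ({(u : AddCircle T), (v : AddCircle T)}ᶜ : Set (AddCircle T)),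
        P (connectedComponentIn {(u : AddCircle T), (v : AddCircle T)}ᶜ z)) ↔
      P ((↑) '' Ioo u v) ∨ P ((↑) '' Ioo v (u + T)) := by
  rw [compl_pair_eq_union huv hvu]
  exact exists_connectedComponentIn_union_iff (isOpen_coe_image_Ioo u v)
    (isOpen_coe_image_Ioo v (u + T)) (disjoint_coe_image_Ioo huv hvu)
    (isConnected_coe_image_Ioo huv) (isConnected_coe_image_Ioo hvu)

theorem coe_eq_iff_exists_equivIco_add_zsmul {x : ℝ} {z : AddCircle T} :
    (x : AddCircle T) = z ↔ ∃ n : ℤ, (equivIco T 0 z : ℝ) + n • T = x := by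
  constructor
  · rintro rfl
    obtain ⟨n, hn⟩ := AddSubgroup.mem_zmultiples_iff.mp
      (QuotientAddGroup.eq_iff_sub_mem.mp (coe_equivIco (a := 0) (y := (x : AddCircle T))).symm)
    exact ⟨n, by rw [hn]; ring⟩
  · rintro ⟨n, rfl⟩
    simp

theorem measurable_equivIco_add (c : ℝ) :
    Measurable fun z : AddCircle T => (equivIco T 0 z : ℝ) + c :=
  (measurable_subtype_coe.comp (measurableEquivIco T 0).measurable).add_const c

noncomputable def periodicLift (μ : Measure (AddCircle T)) : Measure ℝ :=
  Measure.sum fun n : ℤ => μ.map fun z => (equivIco T 0 z : ℝ) + n • T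

variable (μ : Measure (AddCircle T))

theorem periodicLift_apply {A : Set ℝ} (hA : MeasurableSet A) :
    periodicLift μ A = ∑' n : ℤ, μ {z | (equivIco T 0 z : ℝ) + n • T ∈ A} := by
  simp only [periodicLift, Measure.sum_apply _ hA,
    Measure.map_apply (measurable_equivIco_add _) hA]
  rfl

theorem coe_image_eq_iUnion (A : Set ℝ) :
    ((↑) '' A : Set (AddCircle T)) =
      ⋃ n : ℤ, {z | (equivIco T 0 z : ℝ) + n • T ∈ A} := by
  ext z
  simp only [mem_image, mem_iUnion, mem_ofPred_eq, coe_eq_iff_exists_equivIco_add_zsmul]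
  constructor
  · rintro ⟨x, hx, n, rfl⟩
    exact ⟨n, hx⟩
  · rintro ⟨n, hn⟩
    exact ⟨_, hn, n, rfl⟩

theorem periodicLift_eq_zero_iff {A : Set ℝ} (hA : MeasurableSet A) :
    periodicLift μ A = 0 ↔ μ ((↑) '' A) = 0 := by
  rw [periodicLift_apply μ hA, ENNReal.tsum_eq_zero, coe_image_eq_iUnion,
    measure_iUnion_null_iff]

instance [NullSingletonClass μ] : NullSingletonClass (periodicLift μ) :=
  ⟨fun x => (periodicLift_eq_zero_iff μ (measurableSet_singleton x)).2 (by simp)⟩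

theorem periodicLift_Ioc_add_period (t : ℝ) : periodicLift μ (Ioc t (t + T)) = μ univ := by
  set S := fun n : ℤ => {z | (equivIco T 0 z : ℝ) + n • T ∈ Ioc t (t + T)}
  have hS (z : AddCircle T) : ∃! n : ℤ, z ∈ S n := existsUnique_add_zsmul_mem_Ioc hT.out _ t
  rw [periodicLift_apply μ measurableSet_Ioc, ← measure_iUnion (f := S)
    (fun m n hmn => disjoint_left.mpr fun z hm hn => hmn ((hS z).unique hm hn))
    (fun n => measurable_equivIco_add _ measurableSet_Ioc),
    eq_univ_of_forall fun z => mem_iUnion.mpr (hS z).exists]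

instance [IsFiniteMeasure μ] : IsLocallyFiniteMeasure (periodicLift μ) := by
  refine ⟨fun x => ⟨Ioo (x - T / 2) (x + T / 2), Ioo_mem_nhds (by linarith [hT.out])
    (by linarith [hT.out]), ?_⟩⟩
  refine (measure_mono fun y hy => ?_).trans_lt
    ((periodicLift_Ioc_add_period μ (x - T / 2)).trans_lt (measure_lt_top μ univ))
  exact ⟨hy.1, by linarith [hy.2]⟩

noncomputable def liftOfMeasure (x : ℝ) : ℝ :=
  ∫ _ in 0..x, T / μ.real univ ∂periodicLift μ

variable [IsFiniteMeasure μ]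

theorem liftOfMeasure_sub {a b : ℝ} (hab : a ≤ b) :
    liftOfMeasure μ b - liftOfMeasure μ a =
      (periodicLift μ).real (Ioc a b) * (T / μ.real univ) := by
  rw [liftOfMeasure, liftOfMeasure, intervalIntegral.integral_interval_sub_left
    intervalIntegrable_const intervalIntegrable_const, intervalIntegral.integral_const',
    Ioc_eq_empty (not_lt.2 hab), measureReal_empty, sub_zero, smul_eq_mul]

theorem continuous_liftOfMeasure [NullSingletonClass μ] : Continuous (liftOfMeasure μ) :=
  intervalIntegral.continuous_primitive (fun _ _ => intervalIntegrable_const) 0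

theorem monotone_liftOfMeasure : Monotone (liftOfMeasure μ) := fun a b hab =>
  sub_nonneg.mp (by
    rw [liftOfMeasure_sub μ hab]
    exact mul_nonneg measureReal_nonneg (div_nonneg hT.out.le measureReal_nonneg))

variable [NeZero μ]

theorem liftOfMeasure_add_period (x : ℝ) : liftOfMeasure μ (x + T) = liftOfMeasure μ x + T := by
  have h := liftOfMeasure_sub μ (le_add_of_nonneg_right hT.out.le) (a := x)
  rw [measureReal_def, periodicLift_Ioc_add_period, ← measureReal_def,
    mul_div_cancel₀ _ (measureReal_univ_pos.ne')] at h
  linarith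

theorem liftOfMeasure_eq_iff [NullSingletonClass μ] {a b : ℝ} (hab : a ≤ b) :
    liftOfMeasure μ a = liftOfMeasure μ b ↔ μ ((↑) '' Ioo a b) = 0 := by
  rw [eq_comm, ← sub_eq_zero, liftOfMeasure_sub μ hab, mul_eq_zero,
    or_iff_left (div_pos hT.out measureReal_univ_pos).ne',
    measureReal_eq_zero_iff measure_Ioc_lt_top.ne,
    ← measure_congr Ioo_ae_eq_Ioc, periodicLift_eq_zero_iff μ measurableSet_Ioo]

end AddCircle

section CircleMapOfLift

variable {T : ℝ} {G : ℝ → ℝ} (hG : ∀ x, G (x + T) = G x + T)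

noncomputable def circleMapOfLift : AddCircle T → AddCircle T :=
  Periodic.lift (f := fun x => (G x : AddCircle T)) fun x => by simp [hG]

@[simp]
theorem circleMapOfLift_coe (x : ℝ) : circleMapOfLift hG x = G x := rfl

include hG in
theorem periodic_lift_sub_id : Periodic (fun x => G x - x) T :=
  fun x => by simp only [hG]; ring

include hG in
theorem lift_add_zsmul (x : ℝ) (n : ℤ) : G (x + n • T) = G x + n • T := by
  linarith [(periodic_lift_sub_id hG).zsmul n x]

theorem continuous_circleMapOfLift (hc : Continuous G) : Continuous (circleMapOfLift hG) :=
  (QuotientAddGroup.isQuotientMap_mk _).continuous_iff.mpr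
    ((AddCircle.continuous_mk' T).comp hc)

theorem circleMapOfLift_preimage_coe (t : ℝ) :
    circleMapOfLift hG ⁻¹' {(t : AddCircle T)} = (↑) '' (G ⁻¹' {t}) := by
  ext z
  obtain ⟨x, rfl⟩ := QuotientAddGroup.mk_surjective z
  simp only [mem_preimage, mem_singleton_iff, circleMapOfLift_coe, mem_image]
  constructor
  · intro h
    obtain ⟨n, hn⟩ :=
      AddSubgroup.mem_zmultiples_iff.mp (QuotientAddGroup.eq_iff_sub_mem.mp h.symm)
    refine ⟨x + n • T, by rw [lift_add_zsmul hG, hn]; ring, ?_⟩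
    simp
  · rintro ⟨y, hy, hyx⟩
    rw [← circleMapOfLift_coe hG, ← hyx, circleMapOfLift_coe, hy]

variable [hT : Fact (0 < T)]

include hG in
theorem exists_abs_lift_sub_le (hc : Continuous G) : ∃ M, ∀ x, |G x - x| ≤ M := by
  obtain ⟨M, hM⟩ := ((periodic_lift_sub_id hG).isBounded_of_continuous hT.out.ne'
    (by fun_prop)).exists_norm_le
  exact ⟨M, fun x => hM _ (mem_range_self x)⟩

include hG in
theorem lift_surjective (hc : Continuous G) : Surjective G := by
  obtain ⟨M, hM⟩ := exists_abs_lift_sub_le hG hc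
  refine hc.surjective ?_ ?_
  · refine Filter.tendsto_atTop_mono (fun x => ?_)
      (Filter.tendsto_atTop_add_const_right _ (-M) Filter.tendsto_id)
    linarith [(abs_le.mp (hM x)).1, show id x = x from rfl]
  · refine Filter.tendsto_atBot_mono (fun x => ?_)
      (Filter.tendsto_atBot_add_const_right _ M Filter.tendsto_id)
    linarith [(abs_le.mp (hM x)).2, show id x = x from rfl]

include hG in
theorem isCompact_lift_preimage_singleton (hc : Continuous G) (t : ℝ) :
    IsCompact (G ⁻¹' {t}) := by
  obtain ⟨M, hM⟩ := exists_abs_lift_sub_le hG hc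
  refine (isCompact_Icc (a := t - M) (b := t + M)).of_isClosed_subset
    (isClosed_singleton.preimage hc) fun x (hx : G x = t) => ?_
  have := abs_le.mp (hM x)
  constructor <;> linarith

include hG in
theorem isConnected_lift_preimage_singleton (hm : Monotone G) (hc : Continuous G) (t : ℝ) :
    IsConnected (G ⁻¹' {t}) :=
  ⟨lift_surjective hG hc t, (ordConnected_singleton.preimage_mono hm).isPreconnected⟩

theorem circleMapOfLift_coe_eq_coe_iff (hm : Monotone G) {u v : ℝ} (huv : u ≤ v)
    (hvu : v ≤ u + T) :
    circleMapOfLift hG u = circleMapOfLift hG v ↔ G u = G v ∨ G v = G (u + T) := by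
  rw [circleMapOfLift_coe, circleMapOfLift_coe,
    AddCircle.coe_eq_coe_iff_of_le_of_le_add (hm huv) (hG u ▸ hm hvu), hG, eq_comm]

include hG in
theorem image_circleMapOfLift_eq_univ (hc : Continuous G)
    {C : Set (AddCircle T)} (hC : IsClosed C)
    (hGC : ∀ a b, a < b → Disjoint ((↑) '' Ioo a b) C → G a = G b) :
    circleMapOfLift hG '' C = univ := by
  refine eq_univ_of_forall fun z => ?_
  obtain ⟨t, rfl⟩ := QuotientAddGroup.mk_surjective z
  have hfib := isCompact_lift_preimage_singleton hG hc t
  have hbdd := hfib.bddBelow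
  obtain hmin : G (sInf (G ⁻¹' {t})) = t :=
    hfib.sInf_mem (lift_surjective hG hc t)
  set a := sInf (G ⁻¹' {t})
  suffices ha : (a : AddCircle T) ∈ C from ⟨a, ha, by rw [circleMapOfLift_coe, hmin]⟩
  by_contra ha
  obtain ⟨l, hla, hl⟩ := exists_Ioc_subset_of_mem_nhds
    ((hC.isOpen_compl.preimage (AddCircle.continuous_mk' T)).mem_nhds ha) (exists_lt a)
  have hGl : G l = t := hmin ▸ hGC l a hla (disjoint_compl_left.mono_left
    (image_subset_iff.mpr (Ioo_subset_Ioc_self.trans hl)))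
  exact (csInf_le hbdd hGl).not_gt hla

theorem isCompact_circleMapOfLift_preimage (hc : Continuous G) (z : AddCircle T) :
    IsCompact (circleMapOfLift hG ⁻¹' {z}) := by
  obtain ⟨t, rfl⟩ := QuotientAddGroup.mk_surjective z
  rw [circleMapOfLift_preimage_coe]
  exact (isCompact_lift_preimage_singleton hG hc t).image (AddCircle.continuous_mk' T)

theorem isConnected_circleMapOfLift_preimage (hm : Monotone G) (hc : Continuous G)
    (z : AddCircle T) : IsConnected (circleMapOfLift hG ⁻¹' {z}) := by
  obtain ⟨t, rfl⟩ := QuotientAddGroup.mk_surjective z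
  rw [circleMapOfLift_preimage_coe]
  exact (isConnected_lift_preimage_singleton hG hm hc t).image _
    (AddCircle.continuous_mk' T).continuousOn

end CircleMapOfLift

instance : Fact (0 < 2 * Real.pi) := ⟨Real.two_pi_pos⟩

/-- If `C` is a nonempty closed perfect subset of the circle, then there is a cellular
continuous surjection `q : S¹ → S¹` (all fibers compact and connected) with `q(C) = S¹`,
which identifies two distinct points exactly when some connected component of their
complement misses `C`. -/
theorem stmt6 (C : Set S1) (hne : C.Nonempty) (hperf : Perfect C) :
    ∃ q : S1 → S1, Continuous q ∧ Function.Surjective q ∧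
      (∀ z : S1, IsCompact (q ⁻¹' {z}) ∧ IsConnected (q ⁻¹' {z})) ∧
      q '' C = Set.univ ∧
      ∀ x y : S1, x ≠ y →
        (q x = q y ↔ ∃ z ∈ ({x, y}ᶜ : Set S1),
          connectedComponentIn ({x, y}ᶜ : Set S1) z ∩ C = ∅) := by
  obtain ⟨μ, _, _, hμC⟩ := hperf.exists_isFiniteMeasure_support_eq
  have : NeZero μ := ⟨by rintro rfl; simp [← hμC] at hne⟩
  set G := AddCircle.liftOfMeasure μ
  have hG : ∀ x, G (x + 2 * Real.pi) = G x + 2 * Real.pi := AddCircle.liftOfMeasure_add_period μ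
  have hm : Monotone G := AddCircle.monotone_liftOfMeasure μ
  have hc : Continuous G := AddCircle.continuous_liftOfMeasure μ
  have hGC {a b : ℝ} (hab : a ≤ b) : G a = G b ↔ Disjoint ((↑) '' Ioo a b) C := by
    rw [AddCircle.liftOfMeasure_eq_iff μ hab, ← hμC,
      Measure.measure_eq_zero_iff_disjoint_support (AddCircle.isOpen_coe_image_Ioo a b)]
  have himage := image_circleMapOfLift_eq_univ hG hc hperf.closed fun a b hab => (hGC hab.le).2
  refine ⟨circleMapOfLift hG, continuous_circleMapOfLift hG hc,
    range_eq_univ.mp (univ_subset_iff.mp (himage ▸ image_subset_range _ _)),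
    fun z => ⟨isCompact_circleMapOfLift_preimage hG hc z,
      isConnected_circleMapOfLift_preimage hG hm hc z⟩, himage, fun x y hxy => ?_⟩
  obtain ⟨u, v, rfl, rfl, huv, hvu⟩ := AddCircle.exists_coe_eq_coe_lt_lt_add hxy
  rw [circleMapOfLift_coe_eq_coe_iff hG hm huv.le hvu.le, hGC huv.le, hGC hvu.le]
  simp only [disjoint_iff_inter_eq_empty]
  exact (AddCircle.exists_connectedComponentIn_compl_pair_iff huv hvu (P := (· ∩ C = ∅))).symm
end

section
/- Let E be a real inner product space, let p, q ∈ E with p ≠ q, and let u, v ∈ E be unit vectors such that the angle between q − p and u plus the angle between p − q and v is strictly greater than π. Then for every real number t > 0, dist(p + t·u, q + t·v) > dist(p, q). -/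
open scoped RealInnerProductSpace


/-- Euclidean comparison fact: if `u`, `v` are unit vectors at `p ≠ q` whose angles with the
segment from `p` to `q` (resp. from `q` to `p`) sum to more than `π`, then moving time `t > 0`
along the two rays strictly increases the distance. -/
theorem stmt8 {E : Type*} [NormedAddCommGroup E] [InnerProductSpace ℝ E]
    (p q u v : E) (hpq : p ≠ q) (hu : ‖u‖ = 1) (hv : ‖v‖ = 1)
    (hang : Real.pi <
      InnerProductGeometry.angle (q - p) u + InnerProductGeometry.angle (p - q) v) :
    ∀ t : ℝ, 0 < t → dist p q < dist (p + t • u) (q + t • v) := by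
  intro t ht
  have hd : (0:ℝ) < ‖p - q‖ := by
    rw [norm_pos_iff, sub_ne_zero]; exact hpq
  set α := InnerProductGeometry.angle (q - p) u with hαdef
  set β := InnerProductGeometry.angle (p - q) v with hβdef
  have hα0 := InnerProductGeometry.angle_nonneg (q - p) u
  have hαπ := InnerProductGeometry.angle_le_pi (q - p) u
  have hβ0 := InnerProductGeometry.angle_nonneg (p - q) v
  have hβπ := InnerProductGeometry.angle_le_pi (p - q) v
  have hcos : Real.cos β < Real.cos (Real.pi - α) :=
    Real.strictAntiOn_cos ⟨by linarith, by linarith⟩ ⟨by linarith, by linarith⟩ (by linarith)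
  rw [Real.cos_pi_sub] at hcos
  have hca : Real.cos α = (⟪q - p, u⟫) / (‖q - p‖ * ‖u‖) := InnerProductGeometry.cos_angle _ _
  have hcb : Real.cos β = (⟪p - q, v⟫) / (‖p - q‖ * ‖v‖) := InnerProductGeometry.cos_angle _ _
  have hnq : ‖q - p‖ = ‖p - q‖ := norm_sub_rev _ _
  rw [hca, hcb, hu, hv, hnq, mul_one] at hcos
  have hsum : ⟪q - p, u⟫ + ⟪p - q, v⟫ < 0 := by
    rw [div_lt_iff₀ hd, neg_mul, div_mul_cancel₀ _ (ne_of_gt hd)] at hcos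
    linarith
  have hkey : 0 < ⟪p - q, u - v⟫ := by
    have h1 : ⟪q - p, u⟫ = -⟪p - q, u⟫ := by
      rw [show q - p = -(p - q) by abel, inner_neg_left]
    rw [inner_sub_right]
    linarith [hsum, h1]
  have hvec : (p + t • u) - (q + t • v) = (p - q) + t • (u - v) := by
    rw [smul_sub]; abel
  rw [dist_eq_norm, dist_eq_norm, hvec]
  refine lt_of_pow_lt_pow_left₀ 2 (norm_nonneg _) ?_
  rw [norm_add_sq_real, real_inner_smul_right]
  nlinarith [norm_nonneg (t • (u - v)), sq_nonneg ‖t • (u - v)‖, mul_pos ht hkey]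
end

section
/- Let G be a group containing an infinite cyclic subgroup of finite index (i.e. G is virtually ℤ). If A and B are subgroups of G with A ∩ B = {1}, then A is finite or B is finite. -/
/-!
A finite-index subgroup meets every infinite subgroup nontrivially, so `A` and `B` would both
meet the infinite cyclic subgroup `H` in nontrivial subgroups. Two nontrivial subgroups of `ℤ`
always intersect nontrivially (`kℤ ∩ lℤ ∋ kl`), hence `A ⊓ B ≠ ⊥`.
-/

namespace Subgroup

variable {G : Type*} [Group G]

theorem not_disjoint_of_finiteIndex (K H : Subgroup G) [H.FiniteIndex] [Infinite K] :
    ¬ Disjoint K H := by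
  have : Infinite (H.subgroupOf K) := not_finite_iff_infinite.mp fun _ ↦ by
    have := (finite_iff_finite_and_finiteIndex (H.subgroupOf K)).mpr ⟨‹_›, inferInstance⟩
    exact not_finite K
  rw [disjoint_comm, ← subgroupOf_eq_bot]
  intro hbot
  rw [hbot] at this
  exact not_finite (⊥ : Subgroup K)

end Subgroup

theorem IsCyclic.not_disjoint_of_ne_bot {C : Type*} [Group C] [IsCyclic C] [Infinite C]
    {A B : Subgroup C} (hA : A ≠ ⊥) (hB : B ≠ ⊥) : ¬ Disjoint A B := by
  obtain ⟨g, hg⟩ := IsCyclic.exists_generator (α := C)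
  have hg_inf : ¬ IsOfFinOrder g :=
    orderOf_eq_zero_iff.mp (Infinite.orderOf_eq_zero_of_forall_mem_zpowers hg)
  obtain ⟨⟨a, haA⟩, ha1⟩ := Subgroup.ne_bot_iff_exists_ne_one.mp hA
  obtain ⟨⟨b, hbB⟩, hb1⟩ := Subgroup.ne_bot_iff_exists_ne_one.mp hB
  obtain ⟨k, rfl⟩ := Subgroup.mem_zpowers_iff.mp (hg a)
  obtain ⟨l, rfl⟩ := Subgroup.mem_zpowers_iff.mp (hg b)
  have hk : k ≠ 0 := by rintro rfl; simp at ha1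
  have hl : l ≠ 0 := by rintro rfl; simp at hb1
  have hA_mem : g ^ (k * l) ∈ A := by rw [zpow_mul]; exact A.zpow_mem haA l
  have hB_mem : g ^ (k * l) ∈ B := by rw [mul_comm, zpow_mul]; exact B.zpow_mem hbB k
  intro hdisj
  exact hg_inf (isOfFinOrder_iff_zpow_eq_one.mpr
    ⟨k * l, mul_ne_zero hk hl, Subgroup.disjoint_def.mp hdisj hA_mem hB_mem⟩)

/-- In a virtually-`ℤ` group, two subgroups intersecting trivially cannot both be infinite. -/
theorem stmt10 {G : Type*} [Group G]
    (H : Subgroup G) (hfi : H.FiniteIndex) (hcyc : IsCyclic H) (hinfH : Infinite H)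
    (A B : Subgroup G) (hAB : A ⊓ B = ⊥) :
    Finite A ∨ Finite B := by
  by_contra! hinf
  obtain ⟨hA, hB⟩ := hinf
  have meets_H : ∀ K : Subgroup G, Infinite K → K.subgroupOf H ≠ ⊥ := fun K _ ↦ by
    rw [Ne, Subgroup.subgroupOf_eq_bot]
    exact K.not_disjoint_of_finiteIndex H
  apply IsCyclic.not_disjoint_of_ne_bot (meets_H A hA) (meets_H B hB)
  rw [disjoint_iff]
  change (A ⊓ B).subgroupOf H = ⊥
  rw [hAB, Subgroup.bot_subgroupOf]
end

section
/- Let p > 0 and consider the circle AddCircle ℝ p (the reals modulo p), with antipodal map x ↦ x + p/2. If U and V are open subsets of the circle with U ∪ V equal to the whole circle, then there exists a point x such that both x and x + p/2 lie in U, or both x and x + p/2 lie in V. -/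
/-- If the circle `ℝ/pℤ` is covered by two open sets `U` and `V`, then some pair of antipodal
points lies entirely in `U` or entirely in `V`. -/
theorem stmt12 (p : ℝ) (hp : 0 < p) (U V : Set (AddCircle p))
    (hU : IsOpen U) (hV : IsOpen V) (hUV : U ∪ V = Set.univ) :
    ∃ x : AddCircle p, (x ∈ U ∧ x + ((p / 2 : ℝ) : AddCircle p) ∈ U) ∨
      (x ∈ V ∧ x + ((p / 2 : ℝ) : AddCircle p) ∈ V) := by
  by_contra h
  push_neg at h
  set a : AddCircle p := ((p / 2 : ℝ) : AddCircle p) with ha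
  have haa : ∀ x : AddCircle p, x + a + a = x := by
    intro x
    have : a + a = 0 := by
      have hpp : (p / 2 + p / 2 : ℝ) = p := by ring
      rw [ha, ← AddCircle.coe_add, hpp]
      exact AddCircle.coe_period p
    rw [add_assoc, this, add_zero]
  have hmem : ∀ x : AddCircle p, x ∈ U ∨ x ∈ V := by
    intro x
    have := Set.mem_univ x
    rw [← hUV] at this
    exact this
  have keyU : ∀ x : AddCircle p, x ∈ U → x + a ∈ V := by
    intro x hx
    rcases hmem (x + a) with h1 | h1
    · exact absurd h1 ((h x).1 hx)
    · exact h1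
  have keyV : ∀ x : AddCircle p, x ∈ V → x + a ∈ U := by
    intro x hx
    rcases hmem (x + a) with h1 | h1
    · exact h1
    · exact absurd h1 ((h x).2 hx)
  have hdisj : U ∩ V = ∅ := by
    ext x
    simp only [Set.mem_inter_iff, Set.mem_empty_iff_false, iff_false, not_and]
    intro hxU hxV
    exact (h x).2 hxV (keyU x hxU)
  have hUne : U.Nonempty := by
    rcases hmem 0 with h1 | h1
    · exact ⟨0, h1⟩
    · exact ⟨0 + a, keyV 0 h1⟩
  have hVne : V.Nonempty := by
    rcases hmem 0 with h1 | h1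
    · exact ⟨0 + a, keyU 0 h1⟩
    · exact ⟨0, h1⟩
  have hconn : IsPreconnected (Set.univ : Set (AddCircle p)) := isPreconnected_univ
  obtain ⟨x, -, hx⟩ := hconn U V hU hV hUV.ge
    ⟨hUne.choose, Set.mem_univ _, hUne.choose_spec⟩ ⟨hVne.choose, Set.mem_univ _, hVne.choose_spec⟩
  rw [hdisj] at hx
  exact hx
end

section
/- Let p > 0 and let G be a finitely generated infinite subgroup of the group of isometries of the circle AddCircle ℝ p (self-isometries that are bijections, forming a group under composition). Then G contains an element of infinite order. -/
section stmt13Aux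

set_option linter.unusedSectionVars false

variable {p : ℝ} [hp : Fact (0 < p)]

private lemma stmt13.rep_norm (u : AddCircle p) :
    ∃ a : ℝ, (a : AddCircle p) = u ∧ ‖u‖ = |a| := by
  induction u using QuotientAddGroup.induction_on with
  | H x =>
    refine ⟨x - round (p⁻¹ * x) * p, ?_, AddCircle.norm_eq p⟩
    have h0 : (((round (p⁻¹ * x) : ℝ) * p : ℝ) : AddCircle p) = 0 := by
      rw [AddCircle.coe_eq_zero_iff]
      exact ⟨round (p⁻¹ * x), by rw [zsmul_eq_mul]⟩
    rw [AddCircle.coe_sub, h0, sub_zero]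

private lemma stmt13.norm_eq_or {u v : AddCircle p} (h : ‖u‖ = ‖v‖) : v = u ∨ v = -u := by
  obtain ⟨a, ha, ha'⟩ := stmt13.rep_norm u
  obtain ⟨b, hb, hb'⟩ := stmt13.rep_norm v
  rw [ha', hb'] at h
  rcases abs_eq_abs.mp h.symm with h1 | h1
  · left; rw [← ha, ← hb, h1]
  · right; rw [← ha, ← hb, h1, AddCircle.coe_neg]

private lemma stmt13.half_ne_zero : ((p/2 : ℝ) : AddCircle p) ≠ 0 := by
  intro h
  rw [AddCircle.coe_eq_zero_iff] at h
  obtain ⟨n, hn⟩ := h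
  rw [zsmul_eq_mul] at hn
  have hp0 := hp.out.ne'
  have h3 : (2*(n:ℝ) - 1) * p = 0 := by linarith
  rcases mul_eq_zero.mp h3 with h4 | h4
  · have h5 : (2*n : ℤ) = 1 := by exact_mod_cast (by linarith : (2*(n:ℝ)) = 1)
    omega
  · exact hp0 h4

private lemma stmt13.quarter_ne_neg :
    ((p/4 : ℝ) : AddCircle p) ≠ -((p/4 : ℝ) : AddCircle p) := by
  intro h
  apply stmt13.half_ne_zero (p := p)
  have h2 : ((p/4 : ℝ) : AddCircle p) + ((p/4 : ℝ) : AddCircle p) = 0 := by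
    nth_rewrite 1 [h]; exact neg_add_cancel _
  rw [← AddCircle.coe_add] at h2
  convert h2 using 2
  ring

private lemma stmt13.classify (e : AddCircle p ≃ᵢ AddCircle p) :
    (∀ x, e x = x + e 0) ∨ (∀ x, e x = -x + e 0) := by
  set f : AddCircle p → AddCircle p := fun x => e x - e 0 with hf
  have hdist : ∀ x y, dist (f x) (f y) = dist x y := by
    intro x y; simp only [hf, dist_sub_right]; exact e.isometry.dist_eq x y
  have hpt : ∀ x, f x = x ∨ f x = -x := by
    intro x
    have : ‖x‖ = ‖f x‖ := by
      rw [← sub_zero x, ← dist_eq_norm, ← hdist x 0, hf]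
      simp [dist_eq_norm]
    exact stmt13.norm_eq_or this
  have key : (∀ x, f x = x) ∨ (∀ x, f x = -x) := by
    by_cases h : ∀ x, f x = x
    · exact Or.inl h
    · push_neg at h
      obtain ⟨y, hy⟩ := h
      have hyneg : f y = -y := (hpt y).resolve_left hy
      have hyne : y ≠ -y := fun h2 => hy (by rw [hyneg, ← h2])
      refine Or.inr fun x => ?_
      rcases hpt x with hx | hx
      · have hd : dist (f x) (f y) = dist x y := hdist x y
        rw [hx, hyneg] at hd
        have h' : ‖x - y‖ = ‖x - -y‖ := by
          rw [← dist_eq_norm, ← dist_eq_norm, hd]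
        rcases stmt13.norm_eq_or h' with h1 | h1
        · exfalso
          rw [sub_neg_eq_add, sub_eq_add_neg] at h1
          exact hyne (add_left_cancel h1)
        · rw [sub_neg_eq_add, neg_sub] at h1
          have h1' : x + y = y + -x := by rw [h1]; abel
          rw [add_comm] at h1'
          have hxx : x = -x := add_left_cancel h1'
          rw [hx]; exact hxx
      · exact hx
  rcases key with h | h
  · left; intro x; have := h x; simp only [hf] at this
    rw [sub_eq_iff_eq_add] at this; rw [this, add_comm]
  · right; intro x; have := h x; simp only [hf] at this
    rw [sub_eq_iff_eq_add] at this; rw [this, add_comm]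

/-- translation predicate -/
private def stmt13.IsTransl (e : AddCircle p ≃ᵢ AddCircle p) : Prop := ∀ x, e x = x + e 0

private lemma stmt13.not_transl_of_refl {e : AddCircle p ≃ᵢ AddCircle p}
    (h : ∀ x, e x = -x + e 0) : ¬ stmt13.IsTransl e := by
  intro ht
  have h1 := ht ((p/4 : ℝ) : AddCircle p)
  have h2 := h ((p/4 : ℝ) : AddCircle p)
  rw [h1] at h2
  exact stmt13.quarter_ne_neg (add_right_cancel h2)

open stmt13 in
open Classical in
private noncomputable def stmt13.sgn :
    (AddCircle p ≃ᵢ AddCircle p) →* Multiplicative (ZMod 2) where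
  toFun e := Multiplicative.ofAdd (if IsTransl e then 0 else 1)
  map_one' := by
    have h : IsTransl (1 : AddCircle p ≃ᵢ AddCircle p) := fun x => by simp [IsTransl]
    show Multiplicative.ofAdd (if IsTransl (1 : AddCircle p ≃ᵢ AddCircle p) then 0 else 1) = 1
    rw [if_pos h]
    rfl
  map_mul' := by
    intro e f
    show Multiplicative.ofAdd (if IsTransl (e * f) then 0 else 1)
      = Multiplicative.ofAdd (if IsTransl e then 0 else 1)
        * Multiplicative.ofAdd (if IsTransl f then 0 else 1)
    have hmul : ∀ x, (e * f) x = e (f x) := fun x => rfl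
    rcases classify e with he | he <;> rcases classify f with hf | hf
    · have h : IsTransl (e * f) := by
        intro x
        rw [hmul, he (f x), hf x, hmul, he (f 0), hf 0]
        abel
      rw [if_pos h, if_pos (show IsTransl e from he), if_pos (show IsTransl f from hf)]
      rfl
    · have h : ∀ x, (e * f) x = -x + (e * f) 0 := by
        intro x
        rw [hmul, he (f x), hf x, hmul, he (f 0), hf 0]
        abel
      rw [if_neg (not_transl_of_refl h), if_pos (show IsTransl e from he),
        if_neg (not_transl_of_refl hf)]
      rfl
    · have h : ∀ x, (e * f) x = -x + (e * f) 0 := by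
        intro x
        rw [hmul, he (f x), hf x, hmul, he (f 0), hf 0]
        abel
      rw [if_neg (not_transl_of_refl h), if_neg (not_transl_of_refl he),
        if_pos (show IsTransl f from hf)]
      rfl
    · have h : IsTransl (e * f) := by
        intro x
        rw [hmul, he (f x), hf x, hmul, he (f 0), hf 0]
        abel
      rw [if_pos h, if_neg (not_transl_of_refl he), if_neg (not_transl_of_refl hf)]
      rfl

private lemma stmt13.isTransl_of_sgn_eq_one {e : AddCircle p ≃ᵢ AddCircle p}
    (h : stmt13.sgn e = 1) : stmt13.IsTransl e := by
  by_contra hc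
  simp only [stmt13.sgn, MonoidHom.coe_mk, OneHom.coe_mk, if_neg hc] at h
  exact one_ne_zero (by exact_mod_cast
    (Multiplicative.ofAdd.injective (h : _ = Multiplicative.ofAdd (0 : ZMod 2))))

end stmt13Aux

/-- A finitely generated infinite group of isometries of the circle `ℝ/pℤ` contains an
element of infinite order. -/
theorem stmt13 (p : ℝ) [hp : Fact (0 < p)]
    (G : Subgroup (AddCircle p ≃ᵢ AddCircle p)) (hfg : Group.FG G) (hinf : Infinite G) :
    ∃ g ∈ G, ∀ n : ℕ, 1 ≤ n → g ^ n ≠ 1 := by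
  by_contra hcon
  push_neg at hcon
  set ψ : G →* Multiplicative (ZMod 2) := stmt13.sgn.comp G.subtype with hψ
  set H : Subgroup G := ψ.ker with hH
  haveI : Group.FG G := hfg
  haveI hfi : H.FiniteIndex := by
    constructor
    rw [hH, Subgroup.index_ker]
    have : Nonempty ψ.range := ⟨1, 1, map_one ψ⟩
    exact Nat.card_pos.ne'
  haveI hfgH : Group.FG H := Subgroup.fg_of_index_ne_zero H
  have htr : ∀ a : H, stmt13.IsTransl ((a : G) : AddCircle p ≃ᵢ AddCircle p) := by
    intro a
    exact stmt13.isTransl_of_sgn_eq_one a.2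
  letI : CommGroup H :=
    { (inferInstance : Group H) with
      mul_comm := by
        intro a b
        have ha := htr a
        have hb := htr b
        apply Subtype.ext; apply Subtype.ext
        have hco : ∀ x y : H, (((x * y : H) : G) : AddCircle p ≃ᵢ AddCircle p)
            = ((x : G) : AddCircle p ≃ᵢ AddCircle p) * ((y : G) : AddCircle p ≃ᵢ AddCircle p) :=
          fun x y => rfl
        rw [hco, hco]
        ext z
        have h1 : (((a:G):AddCircle p ≃ᵢ AddCircle p) * ((b:G):AddCircle p ≃ᵢ AddCircle p)) z
            = ((a:G):AddCircle p ≃ᵢ AddCircle p) (((b:G):AddCircle p ≃ᵢ AddCircle p) z) := rfl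
        have h2 : (((b:G):AddCircle p ≃ᵢ AddCircle p) * ((a:G):AddCircle p ≃ᵢ AddCircle p)) z
            = ((b:G):AddCircle p ≃ᵢ AddCircle p) (((a:G):AddCircle p ≃ᵢ AddCircle p) z) := rfl
        rw [h1, h2, ha (((b : G) : AddCircle p ≃ᵢ AddCircle p) z),
          hb (((a : G) : AddCircle p ≃ᵢ AddCircle p) z), hb z, ha z]
        abel }
  have htor : Monoid.IsTorsion H := by
    intro x
    obtain ⟨n, hn1, hn⟩ := hcon (((x : G) : AddCircle p ≃ᵢ AddCircle p)) (x : G).2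
    refine isOfFinOrder_iff_pow_eq_one.mpr ⟨n, hn1, ?_⟩
    apply Subtype.ext; apply Subtype.ext
    push_cast
    exact hn
  haveI : Finite H := CommGroup.finite_of_fg_torsion H htor
  have hcard : H.index * Nat.card H = Nat.card G := H.index_mul_card
  have hzero : Nat.card G = 0 := Nat.card_eq_zero_of_infinite
  rw [hzero] at hcard
  rcases Nat.mul_eq_zero.mp hcard with h0 | h0
  · exact hfi.index_ne_zero h0
  · haveI : Nonempty H := ⟨1⟩
    exact Nat.card_pos.ne' h0
end
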